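/- arXiv:1307.2521 — 7 statements merged into one kernel-verified Lean document; each statement's English description precedes it below -/
import Mathlib

section
/- Let P be a finite set of points in ℝ², let k ≥ 1 be an integer, and let ℓ be a line in ℝ² with |P ∩ ℓ| ≥ k + 1. Then P can be covered by at most k lines if and only if P \ ℓ can be covered by at most k − 1 lines. -/
/-- Orientation of an ordered triple of points in the plane: the sign of the
determinant of the 3×3 matrix with rows (1, aₓ, a_y), (1, bₓ, b_y), (1, cₓ, c_y). -/
noncomputable def orient (a b c : ℝ × ℝ) : ℝ :=
  Real.sign (Matrix.det !![1, a.1, a.2; 1, b.1, b.2; 1, c.1, c.2])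

/-- A line in ℝ² is a one-dimensional affine subspace of ℝ². -/
def IsLine (l : AffineSubspace ℝ (ℝ × ℝ)) : Prop :=
  Module.finrank ℝ l.direction = 1

/-- `P` can be covered by at most `k` lines. -/
def CoverableBy (P : Set (ℝ × ℝ)) (k : ℕ) : Prop :=
  ∃ L : Set (AffineSubspace ℝ (ℝ × ℝ)), L.Finite ∧ L.ncard ≤ k ∧
    (∀ l ∈ L, IsLine l) ∧ ∀ p ∈ P, ∃ l ∈ L, p ∈ l

/-- A connecting line of a point set `X`: a line passing through at least two
distinct points of `X`. -/
def IsConnectingLine (X : Set (ℝ × ℝ)) (l : AffineSubspace ℝ (ℝ × ℝ)) : Prop :=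
  IsLine l ∧ ∃ p ∈ X, ∃ q ∈ X, p ≠ q ∧ p ∈ l ∧ q ∈ l

theorem CoverableBy.mono {P : Set (ℝ × ℝ)} {k m : ℕ} (h : CoverableBy P k) (hkm : k ≤ m) :
    CoverableBy P m :=
  let ⟨L, hLfin, hLk, hL, hcov⟩ := h
  ⟨L, hLfin, hLk.trans hkm, hL, hcov⟩

theorem IsLine.affineSpan_pair_eq {l : AffineSubspace ℝ (ℝ × ℝ)} (hl : IsLine l)
    {p q : ℝ × ℝ} (hpq : p ≠ q) (hp : p ∈ l) (hq : q ∈ l) : line[ℝ, p, q] = l := by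
  have hle : line[ℝ, p, q] ≤ l := affineSpan_pair_le_of_mem_of_mem hp hq
  refine AffineSubspace.eq_of_direction_eq_of_nonempty_of_le ?_
    ((affineSpan_nonempty ℝ).2 (Set.insert_nonempty p {q})) hle
  refine Submodule.eq_of_le_of_finrank_le (AffineSubspace.direction_le hle) ?_
  rw [hl, direction_affineSpan, vectorSpan_pair,
    finrank_span_singleton (vsub_ne_zero.2 hpq)]

theorem IsLine.eq_of_mem_of_mem {l₁ l₂ : AffineSubspace ℝ (ℝ × ℝ)} (h₁ : IsLine l₁)
    (h₂ : IsLine l₂) {p q : ℝ × ℝ} (hpq : p ≠ q) (hp₁ : p ∈ l₁) (hq₁ : q ∈ l₁)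
    (hp₂ : p ∈ l₂) (hq₂ : q ∈ l₂) : l₁ = l₂ :=
  (h₁.affineSpan_pair_eq hpq hp₁ hq₁).symm.trans (h₂.affineSpan_pair_eq hpq hp₂ hq₂)

/-- A line other than `ℓ` meets `ℓ` in at most one point, so a cover of more points of `ℓ`
than it has lines must contain `ℓ` itself. -/
theorem mem_of_covers_of_ncard_lt {P : Set (ℝ × ℝ)} {ℓ : AffineSubspace ℝ (ℝ × ℝ)}
    (hℓ : IsLine ℓ) {L : Set (AffineSubspace ℝ (ℝ × ℝ))} (hLfin : L.Finite)
    (hL : ∀ l ∈ L, IsLine l) (hcov : ∀ p ∈ P, ∃ l ∈ L, p ∈ l)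
    (hlt : L.ncard < {p ∈ P | p ∈ ℓ}.ncard) : ℓ ∈ L := by
  by_contra hℓL
  choose! f hfL hfmem using fun p (hp : p ∈ {p ∈ P | p ∈ ℓ}) => hcov p hp.1
  have hinj : Set.InjOn f {p ∈ P | p ∈ ℓ} := by
    intro p hp q hq hfpq
    by_contra hpq
    have hfℓ : f p = ℓ := (hL _ (hfL p hp)).eq_of_mem_of_mem hℓ hpq (hfmem p hp)
      (hfpq ▸ hfmem q hq) hp.2 hq.2
    exact hℓL (hfℓ ▸ hfL p hp)
  exact hlt.not_ge (Set.ncard_le_ncard_of_injOn f hfL hinj hLfin)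

theorem coverableBy_sep_not_mem_of_mem {P : Set (ℝ × ℝ)} {ℓ : AffineSubspace ℝ (ℝ × ℝ)}
    {L : Set (AffineSubspace ℝ (ℝ × ℝ))} (hLfin : L.Finite) (hL : ∀ l ∈ L, IsLine l)
    (hcov : ∀ p ∈ P, ∃ l ∈ L, p ∈ l) (hℓL : ℓ ∈ L) :
    CoverableBy {p ∈ P | p ∉ ℓ} (L.ncard - 1) := by
  refine ⟨L \ {ℓ}, hLfin.sdiff, (Set.ncard_sdiff_singleton_of_mem hℓL).le,
    fun l hl => hL l hl.1, ?_⟩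
  rintro p ⟨hpP, hpℓ⟩
  obtain ⟨l, hlL, hpl⟩ := hcov p hpP
  exact ⟨l, ⟨hlL, fun hlℓ => hpℓ (hlℓ ▸ hpl)⟩, hpl⟩

theorem coverableBy_of_sep_not_mem {P : Set (ℝ × ℝ)} {ℓ : AffineSubspace ℝ (ℝ × ℝ)}
    (hℓ : IsLine ℓ) {k : ℕ} (h : CoverableBy {p ∈ P | p ∉ ℓ} k) : CoverableBy P (k + 1) := by
  obtain ⟨L, hLfin, hLk, hL, hcov⟩ := h
  refine ⟨insert ℓ L, hLfin.insert ℓ, (Set.ncard_insert_le ℓ L).trans (by omega),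
    Set.forall_mem_insert.2 ⟨hℓ, hL⟩, fun p hpP => ?_⟩
  by_cases hpℓ : p ∈ ℓ
  · exact ⟨ℓ, Set.mem_insert ℓ L, hpℓ⟩
  · obtain ⟨l, hlL, hpl⟩ := hcov p ⟨hpP, hpℓ⟩
    exact ⟨l, Set.mem_insert_of_mem ℓ hlL, hpl⟩

theorem reduction_rule_correct_general (P : Set (ℝ × ℝ)) (k : ℕ) (hk : 1 ≤ k)
    (ℓ : AffineSubspace ℝ (ℝ × ℝ)) (hℓ : IsLine ℓ)
    (hcount : k + 1 ≤ {p ∈ P | p ∈ ℓ}.ncard) :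
    CoverableBy P k ↔ CoverableBy {p ∈ P | p ∉ ℓ} (k - 1) := by
  constructor
  · rintro ⟨L, hLfin, hLk, hL, hcov⟩
    have hℓL : ℓ ∈ L := mem_of_covers_of_ncard_lt hℓ hLfin hL hcov (by omega)
    exact (coverableBy_sep_not_mem_of_mem hLfin hL hcov hℓL).mono (by omega)
  · intro h
    simpa only [Nat.sub_add_cancel hk] using coverableBy_of_sep_not_mem hℓ h

/-- If a line `ℓ` contains at least `k + 1` points of a finite point set `P`, then
`P` can be covered by at most `k` lines iff `P \ ℓ` can be covered by at most
`k - 1` lines. -/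
theorem reduction_rule_correct (P : Set (ℝ × ℝ)) (hPfin : P.Finite) (k : ℕ) (hk : 1 ≤ k)
    (ℓ : AffineSubspace ℝ (ℝ × ℝ)) (hℓ : IsLine ℓ)
    (hcount : k + 1 ≤ {p ∈ P | p ∈ ℓ}.ncard) :
    CoverableBy P k ↔ CoverableBy {p ∈ P | p ∉ ℓ} (k - 1) :=
  reduction_rule_correct_general P k hk ℓ hℓ hcount
end

section
/- Let n be a positive integer and let P, Q : Fin n → ℝ² be injective tuples of points with identical order types, i.e., orientation(P i, P j, P l) = orientation(Q i, Q j, Q l) for all index triples i < j < l. Then for every positive integer k, the point set {P i : i ∈ Fin n} can be covered by at most k lines if and only if the point set {Q i : i ∈ Fin n} can be covered by at most k lines. -/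
/-!
Collinearity of a point set is decided by its triples, and a triple is collinear exactly when
its orientation vanishes, so the order type of a tuple determines which sets of indices carry
collinear points. A cover by at most `k` lines amounts to a colouring of the indices with `k`
colours whose classes are collinear, so coverability depends on the order type alone.
-/

theorem orient_eq_zero_iff_collinear (a b c : ℝ × ℝ) :
    orient a b c = 0 ↔ Collinear ℝ ({a, b, c} : Set (ℝ × ℝ)) := by
  have hdet : Matrix.det !![1, a.1, a.2; 1, b.1, b.2; 1, c.1, c.2] =
      (b.1 - a.1) * (c.2 - a.2) - (b.2 - a.2) * (c.1 - a.1) := by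
    simp only [Matrix.det_fin_three, Matrix.of_apply, Matrix.cons_val', Matrix.cons_val_zero,
      Matrix.cons_val_fin_one, Matrix.cons_val_one, Matrix.cons_val, one_mul, mul_one]
    ring
  rw [orient, Real.sign_eq_zero_iff, hdet]
  constructor
  · intro h
    rcases eq_or_ne a b with rfl | hab
    · simpa using collinear_pair ℝ a c
    rw [Set.pair_comm b c, Set.insert_comm a c]
    refine collinear_insert_of_mem_affineSpan_pair ?_
    rw [← vsub_vadd c a, vadd_left_mem_affineSpan_pair]
    have hd : (b.1 - a.1) ^ 2 + (b.2 - a.2) ^ 2 ≠ 0 := by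
      intro h0
      apply hab
      ext <;> nlinarith [sq_nonneg (b.1 - a.1), sq_nonneg (b.2 - a.2)]
    -- projection of `c - a` onto the direction `b - a`
    refine ⟨((c.1 - a.1) * (b.1 - a.1) + (c.2 - a.2) * (b.2 - a.2)) /
      ((b.1 - a.1) ^ 2 + (b.2 - a.2) ^ 2), ?_⟩
    ext <;> simp only [Prod.smul_fst, Prod.smul_snd, vsub_eq_sub, Prod.fst_sub, Prod.snd_sub,
      smul_eq_mul] <;> field_simp
    · linear_combination (b.2 - a.2) * h
    · linear_combination -(b.1 - a.1) * h
  · intro h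
    obtain ⟨v, hv⟩ := (collinear_iff_of_mem (Set.mem_insert a _)).1 h
    obtain ⟨r, rfl⟩ := hv b (by simp)
    obtain ⟨s, rfl⟩ := hv c (by simp)
    simp only [vadd_eq_add, Prod.fst_add, Prod.smul_fst, smul_eq_mul, add_sub_cancel_right,
      Prod.snd_add, Prod.smul_snd]
    ring

theorem collinear_of_forall_collinear_triple {k V P : Type*} [Field k] [AddCommGroup V]
    [Module k V] [AddTorsor V P] {s : Set P}
    (h : ∀ p ∈ s, ∀ q ∈ s, ∀ r ∈ s, Collinear k ({p, q, r} : Set P)) : Collinear k s := by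
  rcases s.subsingleton_or_nontrivial with hs | ⟨p, hp, q, hq, hpq⟩
  · rcases hs.eq_empty_or_singleton with rfl | ⟨p, rfl⟩
    exacts [collinear_empty k P, collinear_singleton k p]
  have hline : Collinear k (line[k, p, q] : Set P) := by
    rw [Collinear, ← AffineSubspace.direction, direction_affineSpan]
    exact collinear_pair k p q
  exact hline.subset fun r hr =>
    (h p hp q hq r hr).mem_affineSpan_of_mem_of_ne (by simp) (by simp) (by simp) hpq

theorem collinear_iff_exists_isLine_superset {s : Set (ℝ × ℝ)} :
    Collinear ℝ s ↔ ∃ l, IsLine l ∧ s ⊆ l := by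
  constructor
  · intro h
    obtain ⟨p₀, v, hv⟩ := (collinear_iff_exists_forall_eq_smul_vadd s).1 h
    obtain ⟨w, hw, hvw⟩ : ∃ w : ℝ × ℝ, w ≠ 0 ∧ v ∈ ℝ ∙ w := by
      rcases eq_or_ne v 0 with rfl | hv0
      · obtain ⟨w, hw⟩ := exists_ne (0 : ℝ × ℝ)
        exact ⟨w, hw, Submodule.zero_mem _⟩
      · exact ⟨v, hv0, Submodule.mem_span_singleton_self v⟩
    refine ⟨AffineSubspace.mk' p₀ (ℝ ∙ w), ?_, ?_⟩
    · rw [IsLine, AffineSubspace.direction_mk', finrank_span_singleton hw]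
    · intro p hp
      obtain ⟨r, rfl⟩ := hv p hp
      exact AffineSubspace.vadd_mem_mk' _ (Submodule.smul_mem _ r hvw)
  · rintro ⟨l, hl, hsl⟩
    exact (collinear_iff_finrank_le_one.2 hl.le).subset hsl

theorem collinear_image_iff_forall_orient_eq_zero {ι : Type*} [LinearOrder ι]
    (X : ι → ℝ × ℝ) (S : Set ι) :
    Collinear ℝ (X '' S) ↔
      ∀ i ∈ S, ∀ j ∈ S, ∀ l ∈ S, i < j → j < l → orient (X i) (X j) (X l) = 0 := by
  refine ⟨fun h i hi j hj l hl _ _ => (orient_eq_zero_iff_collinear _ _ _).2 ?_, fun h => ?_⟩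
  · have hsub : ({i, j, l} : Set ι) ⊆ S := by simp [Set.insert_subset_iff, hi, hj, hl]
    simpa [Set.image_insert_eq] using h.subset (Set.image_mono hsub)
  refine collinear_of_forall_collinear_triple ?_
  rintro _ ⟨i, hi, rfl⟩ _ ⟨j, hj, rfl⟩ _ ⟨l, hl, rfl⟩
  wlog hij : i ≤ j generalizing i j l
  · rw [Set.insert_comm]
    exact this j hj i hi l hl (le_of_not_ge hij)
  wlog hjl : j ≤ l generalizing i j l
  · rw [Set.pair_comm]
    rcases le_total i l with hil | hli
    · exact this i hi l hl j hj hil (le_of_not_ge hjl)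
    · rw [Set.insert_comm]
      exact this l hl i hi j hj hli hij
  rcases hij.eq_or_lt with rfl | hij
  · simpa using collinear_pair ℝ (X i) (X l)
  rcases hjl.eq_or_lt with rfl | hjl
  · simpa using collinear_pair ℝ (X i) (X j)
  exact (orient_eq_zero_iff_collinear _ _ _).1 (h i hi j hj l hl hij hjl)

theorem collinear_image_congr_of_orient_eq {ι : Type*} [LinearOrder ι] {P Q : ι → ℝ × ℝ}
    (hot : ∀ i j l : ι, i < j → j < l → orient (P i) (P j) (P l) = orient (Q i) (Q j) (Q l))
    (S : Set ι) : Collinear ℝ (P '' S) ↔ Collinear ℝ (Q '' S) := by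
  simp +contextual only [collinear_image_iff_forall_orient_eq_zero, hot]

theorem coverableBy_range_iff_exists_collinear_fibers {ι : Type*} (X : ι → ℝ × ℝ) (k : ℕ) :
    CoverableBy (Set.range X) k ↔ ∃ c : ι → Fin k, ∀ m, Collinear ℝ (X '' (c ⁻¹' {m})) := by
  constructor
  · rintro ⟨L, hLfin, hLcard, hLline, hLcover⟩
    have := hLfin.to_subtype
    have hcard : Nat.card L ≤ k := by rwa [Nat.card_coe_set_eq]
    let f : L → Fin k := fun l => Fin.castLE hcard (Finite.equivFin L l)
    have hf : f.Injective := (Fin.castLE_injective hcard).comp (Finite.equivFin L).injective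
    choose g hgL hg using fun i => hLcover (X i) ⟨i, rfl⟩
    let c : ι → Fin k := fun i => f ⟨g i, hgL i⟩
    refine ⟨c, fun m => ?_⟩
    rcases (c ⁻¹' {m}).eq_empty_or_nonempty with he | ⟨i₀, hi₀⟩
    · simpa [he] using collinear_empty ℝ (ℝ × ℝ)
    refine collinear_iff_exists_isLine_superset.2 ⟨g i₀, hLline _ (hgL i₀), ?_⟩
    rintro _ ⟨i, hi, rfl⟩
    have hgi : g i = g i₀ := congrArg Subtype.val (hf (hi.trans hi₀.symm))
    exact hgi ▸ hg i
  · rintro ⟨c, hc⟩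
    choose l hl hcl using fun m => collinear_iff_exists_isLine_superset.1 (hc m)
    refine ⟨Set.range l, Set.finite_range l, ?_, ?_, ?_⟩
    · rw [← Nat.card_coe_set_eq]
      exact (Finite.card_range_le l).trans_eq (Nat.card_fin k)
    · rintro _ ⟨m, rfl⟩
      exact hl m
    · rintro _ ⟨i, rfl⟩
      exact ⟨l (c i), ⟨c i, rfl⟩, hcl (c i) ⟨i, rfl, rfl⟩⟩

theorem comb_equiv_plc_general (n : ℕ) (P Q : Fin n → ℝ × ℝ)
    (hot : ∀ i j l : Fin n, i < j → j < l →
      orient (P i) (P j) (P l) = orient (Q i) (Q j) (Q l))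
    (k : ℕ) :
    CoverableBy (Set.range P) k ↔ CoverableBy (Set.range Q) k := by
  simp only [coverableBy_range_iff_exists_collinear_fibers, collinear_image_congr_of_orient_eq hot]

/-- Injective point tuples with identical order types give equivalent
Point Line Cover instances. -/
theorem comb_equiv_plc (n : ℕ) (hn : 0 < n) (P Q : Fin n → ℝ × ℝ)
    (hPinj : Function.Injective P) (hQinj : Function.Injective Q)
    (hot : ∀ i j l : Fin n, i < j → j < l →
      orient (P i) (P j) (P l) = orient (Q i) (Q j) (Q l))
    (k : ℕ) (hk : 0 < k) :
    CoverableBy (Set.range P) k ↔ CoverableBy (Set.range Q) k :=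
  comb_equiv_plc_general n P Q hot k
end

section
/- Let n be a positive integer and let P, Q : Fin n → ℝ² be injective tuples such that for all index triples i < j < l, the points P i, P j, P l are collinear if and only if the points Q i, Q j, Q l are collinear. Then for every positive integer k, the point set {P i : i ∈ Fin n} can be covered by at most k lines if and only if the point set {Q i : i ∈ Fin n} can be covered by at most k lines. -/
/-!
A point set lies on a line as soon as all of its triples are collinear. Hence a cover of the
points `P i` by lines transfers to the `Q i`: replace each line `ℓ` of the cover by a line
through the points `Q i` with `P i ∈ ℓ`. Whether `{p i, p j, p l}` is collinear depends only on
the set `{i, j, l}`, so the hypothesis on increasing triples covers all triples.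
-/

theorem collinear_triple_iff_of_forall_lt {k V P V' P' ι : Type*} [Field k]
    [AddCommGroup V] [Module k V] [AddTorsor V P] [AddCommGroup V'] [Module k V']
    [AddTorsor V' P'] [LinearOrder ι] {p : ι → P} {q : ι → P'}
    (h : ∀ i j l, i < j → j < l → (Collinear k {p i, p j, p l} ↔ Collinear k {q i, q j, q l}))
    (i j l : ι) : Collinear k {p i, p j, p l} ↔ Collinear k {q i, q j, q l} := by
  wlog hij : i < j generalizing i j
  · rcases (not_lt.mp hij).eq_or_lt with rfl | hji
    · simp [collinear_pair]
    · rw [Set.insert_comm, Set.insert_comm (q i)]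
      exact this j i hji
  wlog hjl : j < l generalizing j l
  · rcases (not_lt.mp hjl).eq_or_lt with rfl | hlj
    · simp [collinear_pair]
    rw [Set.pair_comm, Set.pair_comm (q j)]
    rcases lt_trichotomy i l with hil | rfl | hli
    · exact this (j := l) (l := j) hil hlj
    · simp [collinear_pair]
    · rw [Set.insert_comm, Set.insert_comm (q i)]
      exact h l i j hli hij
  exact h i j l hij hjl

theorem isLine_affineSpan_pair {p q : ℝ × ℝ} (h : p ≠ q) : IsLine line[ℝ, p, q] := by
  rw [IsLine, direction_affineSpan, vectorSpan_pair]
  exact finrank_span_singleton (vsub_ne_zero.mpr h)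

theorem exists_isLine_mem (p : ℝ × ℝ) : ∃ l, IsLine l ∧ p ∈ l :=
  ⟨line[ℝ, p, p + (1, 0)], isLine_affineSpan_pair (by simp), left_mem_affineSpan_pair ℝ _ _⟩

theorem IsLine.collinear {l : AffineSubspace ℝ (ℝ × ℝ)} (hl : IsLine l) :
    Collinear ℝ (l : Set (ℝ × ℝ)) := by
  rw [Collinear, ← AffineSubspace.direction_eq_vectorSpan, ← Module.finrank_eq_rank, hl]
  norm_num

theorem exists_isLine_superset_of_forall_collinear_triple {s : Set (ℝ × ℝ)}
    (h : ∀ a ∈ s, ∀ b ∈ s, ∀ c ∈ s, Collinear ℝ {a, b, c}) :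
    ∃ l, IsLine l ∧ s ⊆ l := by
  rcases s.subsingleton_or_nontrivial with hs | ⟨a, ha, b, hb, hab⟩
  · rcases hs.eq_empty_or_singleton with rfl | ⟨p, rfl⟩
    · obtain ⟨l, hl, -⟩ := exists_isLine_mem 0
      exact ⟨l, hl, Set.empty_subset _⟩
    · obtain ⟨l, hl, hpl⟩ := exists_isLine_mem p
      exact ⟨l, hl, Set.singleton_subset_iff.mpr hpl⟩
  · refine ⟨line[ℝ, a, b], isLine_affineSpan_pair hab, fun c hc => ?_⟩
    exact (h a ha b hb c hc).mem_affineSpan_of_mem_of_ne (by simp) (by simp) (by simp) hab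

theorem CoverableBy.range_of_forall_collinear_imp {ι : Type*} {P Q : ι → ℝ × ℝ}
    (hPQ : ∀ i j m, Collinear ℝ {P i, P j, P m} → Collinear ℝ {Q i, Q j, Q m}) {k : ℕ}
    (h : CoverableBy (Set.range P) k) : CoverableBy (Set.range Q) k := by
  obtain ⟨L, hLfin, hLcard, hLline, hLcov⟩ := h
  have : ∀ l ∈ L, ∃ l', IsLine l' ∧ Q '' {i | P i ∈ l} ⊆ l' := by
    intro l hl
    apply exists_isLine_superset_of_forall_collinear_triple
    rintro _ ⟨i, hi, rfl⟩ _ ⟨j, hj, rfl⟩ _ ⟨m, hm, rfl⟩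
    refine hPQ i j m ((hLline l hl).collinear.subset ?_)
    simp only [Set.insert_subset_iff, Set.singleton_subset_iff]
    exact ⟨hi, hj, hm⟩
  choose! f hf_line hf_superset using this
  refine ⟨f '' L, hLfin.image f, (Set.ncard_image_le hLfin).trans hLcard, ?_, ?_⟩
  · rintro _ ⟨l, hl, rfl⟩
    exact hf_line l hl
  · rintro _ ⟨i, rfl⟩
    obtain ⟨l, hl, hil⟩ := hLcov (P i) ⟨i, rfl⟩
    exact ⟨f l, ⟨l, hl, rfl⟩, hf_superset l hl ⟨i, hil, rfl⟩⟩

theorem collinear_equiv_plc_general (n : ℕ) (P Q : Fin n → ℝ × ℝ)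
    (htriples : ∀ i j l : Fin n, i < j → j < l →
      (Collinear ℝ ({P i, P j, P l} : Set (ℝ × ℝ)) ↔
        Collinear ℝ ({Q i, Q j, Q l} : Set (ℝ × ℝ))))
    (k : ℕ) :
    CoverableBy (Set.range P) k ↔ CoverableBy (Set.range Q) k := by
  have hall := collinear_triple_iff_of_forall_lt htriples
  exact ⟨CoverableBy.range_of_forall_collinear_imp fun i j m => (hall i j m).mp,
    CoverableBy.range_of_forall_collinear_imp fun i j m => (hall i j m).mpr⟩

/-- Injective point tuples whose triples are collinear simultaneously give
equivalent Point Line Cover instances. -/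
theorem collinear_equiv_plc (n : ℕ) (hn : 0 < n) (P Q : Fin n → ℝ × ℝ)
    (hPinj : Function.Injective P) (hQinj : Function.Injective Q)
    (htriples : ∀ i j l : Fin n, i < j → j < l →
      (Collinear ℝ ({P i, P j, P l} : Set (ℝ × ℝ)) ↔
        Collinear ℝ ({Q i, Q j, Q l} : Set (ℝ × ℝ))))
    (k : ℕ) (hk : 0 < k) :
    CoverableBy (Set.range P) k ↔ CoverableBy (Set.range Q) k :=
  collinear_equiv_plc_general n P Q htriples k
end

section
/- Let n be a positive integer and let P : Fin n → ℝ² be an injective tuple of points. Then there exists s : Fin n × Fin 2 → ℝ² such that the 2n points s(i, u) are pairwise distinct, no three of them are collinear, and for all pairwise distinct indices i, j, l ∈ Fin n: (a) if orientation(P i, P j, P l) = +1 then orientation(s(i,u), s(j,v), s(l,w)) = +1 for all u, v, w ∈ Fin 2; (b) if orientation(P i, P j, P l) = −1 then orientation(s(i,u), s(j,v), s(l,w)) = −1 for all u, v, w ∈ Fin 2; and (c) if P i, P j, P l are collinear then the eight values orientation(s(i,u), s(j,v), s(l,w)), for u, v, w ∈ Fin 2, are not all equal. -/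
open Filter Topology

namespace OrderTypeEncoding

def cross : (ℝ × ℝ) →ₗ[ℝ] (ℝ × ℝ) →ₗ[ℝ] ℝ :=
  LinearMap.mk₂ ℝ (fun x y => x.1 * y.2 - x.2 * y.1)
    (fun _ _ _ => by simp only [Prod.fst_add, Prod.snd_add]; ring)
    (fun _ _ _ => by simp only [Prod.smul_fst, Prod.smul_snd, smul_eq_mul]; ring)
    (fun _ _ _ => by simp only [Prod.fst_add, Prod.snd_add]; ring)
    (fun _ _ _ => by simp only [Prod.smul_fst, Prod.smul_snd, smul_eq_mul]; ring)

@[simp] lemma cross_apply (x y : ℝ × ℝ) : cross x y = x.1 * y.2 - x.2 * y.1 := rfl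

lemma cross_self (x : ℝ × ℝ) : cross x x = 0 := by simp [mul_comm]

lemma sq_add_sq_ne_zero {w : ℝ × ℝ} (hw : w ≠ 0) : w.1 ^ 2 + w.2 ^ 2 ≠ 0 := by
  have : w.1 ≠ 0 ∨ w.2 ≠ 0 := by contrapose! hw; exact Prod.ext hw.1 hw.2
  rcases this with h | h <;> positivity

lemma exists_cross_ne_zero {w : ℝ × ℝ} (hw : w ≠ 0) : ∃ x, cross x w ≠ 0 :=
  ⟨(w.2, -w.1), by simpa [sq, add_comm] using sq_add_sq_ne_zero hw⟩

lemma orient_eq_sign_cross (a b c : ℝ × ℝ) :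
    orient a b c = Real.sign (cross (b - a) (c - a)) := by
  rw [orient, Matrix.det_fin_three]
  congr 1
  simp only [Matrix.of_apply, Matrix.cons_val', Matrix.cons_val_zero, Matrix.cons_val_one,
    Matrix.cons_val_fin_one, Matrix.cons_val, cross_apply, Prod.fst_sub, Prod.snd_sub]
  ring

lemma collinear_iff_cross_eq_zero {a b c : ℝ × ℝ} :
    Collinear ℝ ({a, b, c} : Set (ℝ × ℝ)) ↔ cross (b - a) (c - a) = 0 := by
  constructor
  · rw [collinear_iff_of_mem (Set.mem_insert a _)]
    rintro ⟨v, hv⟩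
    obtain ⟨r, rfl⟩ := hv b (by simp)
    obtain ⟨t, rfl⟩ := hv c (by simp)
    simp only [vadd_eq_add, add_sub_cancel_right, map_smul, LinearMap.smul_apply, cross_self,
      smul_zero]
  · intro h
    rcases eq_or_ne b a with rfl | hba
    · simpa using collinear_pair ℝ b c
    have hu := sq_add_sq_ne_zero (sub_ne_zero.mpr hba)
    set u := b - a
    set w := c - a
    have hw : w = ((u.1 * w.1 + u.2 * w.2) / (u.1 ^ 2 + u.2 ^ 2)) • u := by
      simp only [cross_apply] at h
      ext <;> simp only [Prod.smul_fst, Prod.smul_snd, smul_eq_mul] <;> field_simp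
      · linear_combination -u.2 * h
      · linear_combination u.1 * h
    have hc : c = ((u.1 * w.1 + u.2 * w.2) / (u.1 ^ 2 + u.2 ^ 2)) • (b -ᵥ a) +ᵥ a := by
      rw [vsub_eq_sub, vadd_eq_add, ← hw, sub_add_cancel]
    rw [Set.pair_comm, Set.insert_comm, hc]
    exact collinear_insert_of_mem_affineSpan_pair (smul_vsub_vadd_mem_affineSpan_pair _ _ _)

lemma orient_eq_zero_iff_collinear {a b c : ℝ × ℝ} :
    orient a b c = 0 ↔ Collinear ℝ ({a, b, c} : Set (ℝ × ℝ)) := by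
  rw [orient_eq_sign_cross, Real.sign_eq_zero_iff, collinear_iff_cross_eq_zero]

lemma _root_.Real.sign_mul_of_pos {ε : ℝ} (hε : 0 < ε) (x : ℝ) :
    Real.sign (ε * x) = Real.sign x := by
  rcases lt_trichotomy x 0 with hx | rfl | hx
  · rw [Real.sign_of_neg hx, Real.sign_of_neg (mul_neg_of_pos_of_neg hε hx)]
  · rw [mul_zero]
  · rw [Real.sign_of_pos hx, Real.sign_of_pos (mul_pos hε hx)]

lemma _root_.Filter.Tendsto.eventually_sign_eq {α : Type*} {l : Filter α} {f : α → ℝ}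
    {a : ℝ} (hf : Tendsto f l (𝓝 a)) (ha : a ≠ 0) :
    ∀ᶠ x in l, Real.sign (f x) = Real.sign a := by
  rcases ha.lt_or_gt with ha | ha
  · filter_upwards [hf.eventually_lt_const ha] with x hx
    rw [Real.sign_of_neg hx, Real.sign_of_neg ha]
  · filter_upwards [hf.eventually_const_lt ha] with x hx
    rw [Real.sign_of_pos hx, Real.sign_of_pos ha]

lemma eventually_sign_quadratic_eq_of_ne_zero {a : ℝ} (b c : ℝ) (ha : a ≠ 0) :
    ∀ᶠ ε in 𝓝 (0 : ℝ), Real.sign (a + ε * b + ε ^ 2 * c) = Real.sign a := by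
  have hlim : Tendsto (fun ε : ℝ => a + ε * b + ε ^ 2 * c) (𝓝 0) (𝓝 a) := by
    simpa using ((by fun_prop : Continuous fun ε : ℝ => a + ε * b + ε ^ 2 * c).tendsto 0)
  exact hlim.eventually_sign_eq ha

lemma eventually_sign_quadratic_eq_of_eq_zero {b : ℝ} (c : ℝ) (hb : b ≠ 0) :
    ∀ᶠ ε in 𝓝[>] (0 : ℝ), Real.sign (0 + ε * b + ε ^ 2 * c) = Real.sign b := by
  have hlim : Tendsto (fun ε : ℝ => b + ε * c) (𝓝 0) (𝓝 b) := by
    simpa using ((by fun_prop : Continuous fun ε : ℝ => b + ε * c).tendsto 0)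
  filter_upwards [nhdsWithin_le_nhds (hlim.eventually_sign_eq hb), self_mem_nhdsWithin]
    with ε hsign hε
  rw [← hsign, ← Real.sign_mul_of_pos hε (b + ε * c)]
  ring_nf

lemma eventually_add_smul_ne_zero {E : Type*} [NormedAddCommGroup E] [NormedSpace ℝ E]
    {a b : E} (h : a ≠ 0 ∨ b ≠ 0) : ∀ᶠ ε in 𝓝[>] (0 : ℝ), a + ε • b ≠ 0 := by
  rcases eq_or_ne a 0 with rfl | ha
  · filter_upwards [self_mem_nhdsWithin] with ε hε
    simpa using ⟨hε.ne', h.resolve_left (not_not.mpr rfl)⟩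
  · have hlim : Tendsto (fun ε : ℝ => a + ε • b) (𝓝 0) (𝓝 a) := by
      simpa using ((by fun_prop : Continuous fun ε : ℝ => a + ε • b).tendsto 0)
    exact nhdsWithin_le_nhds (hlim.eventually_ne ha)

lemma fin_two_pigeonhole (u v w : Fin 2) : u = v ∨ u = w ∨ v = w := by omega

def endSign (u : Fin 2) : ℝ := ![1, -1] u

@[simp] lemma endSign_zero : endSign 0 = 1 := rfl
@[simp] lemma endSign_one : endSign 1 = -1 := rfl

lemma endSign_sub_ne_zero {u v : Fin 2} (h : u ≠ v) : endSign u - endSign v ≠ 0 := by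
  fin_cases u <;> fin_cases v <;> norm_num [endSign] at *

lemma endSign_ne_zero (u : Fin 2) : endSign u ≠ 0 := by
  fin_cases u <;> norm_num

variable {ι : Type*}

def displacement (p : ι × Fin 2) : (ι → ℝ × ℝ) →ₗ[ℝ] ℝ × ℝ :=
  endSign p.2 • LinearMap.proj p.1

@[simp] lemma displacement_apply (p : ι × Fin 2) (δ : ι → ℝ × ℝ) :
    displacement p δ = endSign p.2 • δ p.1 := rfl

def segmentEnd (P δ : ι → ℝ × ℝ) (ε : ℝ) (p : ι × Fin 2) : ℝ × ℝ :=
  P p.1 + ε • displacement p δ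

lemma segmentEnd_sub_segmentEnd (P δ : ι → ℝ × ℝ) (ε : ℝ) (p q : ι × Fin 2) :
    segmentEnd P δ ε q - segmentEnd P δ ε p =
      (P q.1 - P p.1) + ε • (displacement q δ - displacement p δ) := by
  simp only [segmentEnd, smul_sub]
  abel

/-- The coefficient of `ε` in `cross (s q - s p) (s r - s p)` for `s = segmentEnd P δ ε`,
as a linear form in `δ`. -/
def firstOrder (P : ι → ℝ × ℝ) (p q r : ι × Fin 2) :
    Module.Dual ℝ (ι → ℝ × ℝ) :=
  (cross.flip (P r.1 - P p.1)).comp (displacement q - displacement p) +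
    (cross (P q.1 - P p.1)).comp (displacement r - displacement p)

lemma firstOrder_apply (P δ : ι → ℝ × ℝ) (p q r : ι × Fin 2) :
    firstOrder P p q r δ = cross (displacement q δ - displacement p δ) (P r.1 - P p.1) +
      cross (P q.1 - P p.1) (displacement r δ - displacement p δ) := rfl

lemma cross_segmentEnd_sub (P δ : ι → ℝ × ℝ) (ε : ℝ) (p q r : ι × Fin 2) :
    cross (segmentEnd P δ ε q - segmentEnd P δ ε p)
        (segmentEnd P δ ε r - segmentEnd P δ ε p) =
      cross (P q.1 - P p.1) (P r.1 - P p.1) + ε * firstOrder P p q r δ +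
        ε ^ 2 * cross (displacement q δ - displacement p δ)
          (displacement r δ - displacement p δ) := by
  rw [segmentEnd_sub_segmentEnd, segmentEnd_sub_segmentEnd, firstOrder_apply]
  simp only [map_add, map_smul, LinearMap.add_apply, LinearMap.smul_apply, smul_eq_mul]
  ring

lemma firstOrder_ne_zero {P : ι → ℝ × ℝ} (hP : Function.Injective P) {p q r : ι × Fin 2}
    (hpq : p ≠ q) (hpr : p ≠ r) (hqr : q ≠ r) : firstOrder P p q r ≠ 0 := by
  classical
  obtain ⟨i, u⟩ := p
  obtain ⟨j, v⟩ := q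
  obtain ⟨l, w⟩ := r
  simp only [Ne, Prod.mk.injEq, not_and] at hpq hpr hqr
  rw [Ne, DFunLike.ext_iff, not_forall]
  rcases eq_or_ne i j with rfl | hij
  · have hil : i ≠ l := by
      rintro rfl
      rcases fin_two_pigeonhole u v w with h | h | h
      exacts [hpq rfl h, hpr rfl h, hqr rfl h]
    obtain ⟨x, hx⟩ := exists_cross_ne_zero (sub_ne_zero.mpr (hP.ne hil.symm))
    have hval : firstOrder P (i, u) (i, v) (l, w) (Pi.single i x) =
        (endSign v - endSign u) * cross x (P l - P i) := by
      simp [firstOrder_apply, hil.symm]; ring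
    exact ⟨Pi.single i x, by
      rw [hval]; exact mul_ne_zero (endSign_sub_ne_zero fun h => hpq rfl h.symm) hx⟩
  obtain ⟨x, hx⟩ := exists_cross_ne_zero (sub_ne_zero.mpr (hP.ne hij.symm))
  rcases eq_or_ne i l with rfl | hil
  · have hval : firstOrder P (i, u) (j, v) (i, w) (Pi.single i x) =
        (endSign u - endSign w) * cross x (P j - P i) := by
      simp [firstOrder_apply, hij.symm]; ring
    exact ⟨Pi.single i x, by
      rw [hval]; exact mul_ne_zero (endSign_sub_ne_zero (hpr rfl)) hx⟩
  rcases eq_or_ne j l with rfl | hjl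
  · have hval : firstOrder P (i, u) (j, v) (j, w) (Pi.single j x) =
        (endSign v - endSign w) * cross x (P j - P i) := by
      simp [firstOrder_apply, hij]; ring
    exact ⟨Pi.single j x, by
      rw [hval]; exact mul_ne_zero (endSign_sub_ne_zero (hqr rfl)) hx⟩
  · have hval : firstOrder P (i, u) (j, v) (l, w) (Pi.single l x) =
        -endSign w * cross x (P j - P i) := by
      simp [firstOrder_apply, hil, hjl]; ring
    exact ⟨Pi.single l x, by
      rw [hval]; exact mul_ne_zero (neg_ne_zero.mpr (endSign_ne_zero w)) hx⟩

lemma exists_generic_directions [Finite ι] {P : ι → ℝ × ℝ} (hP : Function.Injective P) :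
    ∃ δ : ι → ℝ × ℝ, (∀ i, δ i ≠ 0) ∧
      ∀ p q r, p ≠ q → p ≠ r → q ≠ r → firstOrder P p q r δ ≠ 0 := by
  classical
  let Distinct := {t : (ι × Fin 2) × (ι × Fin 2) × (ι × Fin 2) //
    t.1 ≠ t.2.1 ∧ t.1 ≠ t.2.2 ∧ t.2.1 ≠ t.2.2}
  let V : ι ⊕ Distinct → Submodule ℝ (ι → ℝ × ℝ) :=
    Sum.elim (fun i => LinearMap.ker (LinearMap.proj i))
      (fun t => LinearMap.ker (firstOrder P t.1.1 t.1.2.1 t.1.2.2))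
  have hV : ∀ k, V k ≠ ⊤ := by
    rintro (i | ⟨⟨p, q, r⟩, hpq, hpr, hqr⟩) <;>
      simp only [V, Sum.elim_inl, Sum.elim_inr, Ne, LinearMap.ker_eq_top]
    · intro h
      simpa using congr($h (Pi.single i (1, 0)))
    · exact firstOrder_ne_zero hP hpq hpr hqr
  obtain ⟨δ, hδ⟩ := Submodule.exists_forall_notMem_of_forall_ne_top V hV
  exact ⟨δ, fun i => hδ (.inl i),
    fun p q r hpq hpr hqr => hδ (.inr ⟨(p, q, r), hpq, hpr, hqr⟩)⟩

section Eventually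

variable {P δ : ι → ℝ × ℝ} {p q r : ι × Fin 2}

lemma eventually_orient_segmentEnd_eq (h : orient (P p.1) (P q.1) (P r.1) ≠ 0) :
    ∀ᶠ ε in 𝓝[>] (0 : ℝ),
      orient (segmentEnd P δ ε p) (segmentEnd P δ ε q) (segmentEnd P δ ε r) =
        orient (P p.1) (P q.1) (P r.1) := by
  rw [orient_eq_sign_cross, Ne, Real.sign_eq_zero_iff] at h
  filter_upwards [nhdsWithin_le_nhds (eventually_sign_quadratic_eq_of_ne_zero _ _ h)] with ε hε
  rw [orient_eq_sign_cross, orient_eq_sign_cross, cross_segmentEnd_sub, hε]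

lemma eventually_orient_segmentEnd_eq_sign_firstOrder (h : orient (P p.1) (P q.1) (P r.1) = 0)
    (hδ : firstOrder P p q r δ ≠ 0) :
    ∀ᶠ ε in 𝓝[>] (0 : ℝ),
      orient (segmentEnd P δ ε p) (segmentEnd P δ ε q) (segmentEnd P δ ε r) =
        Real.sign (firstOrder P p q r δ) := by
  rw [orient_eq_sign_cross, Real.sign_eq_zero_iff] at h
  filter_upwards [eventually_sign_quadratic_eq_of_eq_zero _ hδ] with ε hε
  rw [orient_eq_sign_cross, cross_segmentEnd_sub, h, hε]

lemma eventually_not_collinear_segmentEnd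
    (hδ : orient (P p.1) (P q.1) (P r.1) = 0 → firstOrder P p q r δ ≠ 0) :
    ∀ᶠ ε in 𝓝[>] (0 : ℝ), ¬ Collinear ℝ
      ({segmentEnd P δ ε p, segmentEnd P δ ε q, segmentEnd P δ ε r} : Set (ℝ × ℝ)) := by
  simp_rw [← orient_eq_zero_iff_collinear]
  by_cases h : orient (P p.1) (P q.1) (P r.1) = 0
  · filter_upwards [eventually_orient_segmentEnd_eq_sign_firstOrder h (hδ h)] with ε hε
    rw [hε, Real.sign_eq_zero_iff]
    exact hδ h
  · filter_upwards [eventually_orient_segmentEnd_eq h] with ε hε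
    rwa [hε]

lemma eventually_injective_segmentEnd [Finite ι] (hP : Function.Injective P)
    (hδ : ∀ i, δ i ≠ 0) :
    ∀ᶠ ε in 𝓝[>] (0 : ℝ), Function.Injective (segmentEnd P δ ε) := by
  have hne : ∀ p q, q ≠ p →
      ∀ᶠ ε in 𝓝[>] (0 : ℝ), segmentEnd P δ ε q - segmentEnd P δ ε p ≠ 0 := by
    rintro ⟨i, u⟩ ⟨j, v⟩ hqp
    simp_rw [segmentEnd_sub_segmentEnd]
    apply eventually_add_smul_ne_zero
    rcases eq_or_ne j i with rfl | hji
    · right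
      simpa [← sub_smul] using ⟨endSign_sub_ne_zero fun h => hqp (by rw [h]), hδ j⟩
    · exact .inl (sub_ne_zero.mpr (hP.ne hji))
  simp only [← eventually_all] at hne
  filter_upwards [hne] with ε hε p q hpq
  by_contra h
  exact hε q p h (sub_eq_zero.mpr hpq)

lemma firstOrder_one_one_one (P δ : ι → ℝ × ℝ) (i j l : ι) :
    firstOrder P (i, 1) (j, 1) (l, 1) δ = -firstOrder P (i, 0) (j, 0) (l, 0) δ := by
  simp only [firstOrder_apply, displacement_apply, endSign_zero, endSign_one, neg_smul, one_smul,
    map_neg, map_sub, LinearMap.neg_apply, LinearMap.sub_apply]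
  ring

lemma eventually_orient_segmentEnd_zero_ne_one {i j l : ι} (h : orient (P i) (P j) (P l) = 0)
    (hδ : firstOrder P (i, 0) (j, 0) (l, 0) δ ≠ 0) :
    ∀ᶠ ε in 𝓝[>] (0 : ℝ),
      orient (segmentEnd P δ ε (i, 0)) (segmentEnd P δ ε (j, 0)) (segmentEnd P δ ε (l, 0)) ≠
        orient (segmentEnd P δ ε (i, 1)) (segmentEnd P δ ε (j, 1))
          (segmentEnd P δ ε (l, 1)) := by
  have hδ' : firstOrder P (i, 1) (j, 1) (l, 1) δ ≠ 0 := by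
    rw [firstOrder_one_one_one]
    exact neg_ne_zero.mpr hδ
  filter_upwards
    [eventually_orient_segmentEnd_eq_sign_firstOrder (p := (i, 0)) (q := (j, 0)) (r := (l, 0))
      h hδ,
    eventually_orient_segmentEnd_eq_sign_firstOrder (p := (i, 1)) (q := (j, 1)) (r := (l, 1))
      h hδ'] with ε h₀ h₁
  rw [h₀, h₁, firstOrder_one_one_one, Real.sign_neg]
  rcases Real.sign_apply_eq_of_ne_zero _ hδ with hs | hs <;> rw [hs] <;> norm_num

end Eventually

end OrderTypeEncoding

open OrderTypeEncoding in
theorem encode_order_type_general_position_general (n : ℕ)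
    (P : Fin n → ℝ × ℝ) (hPinj : Function.Injective P) :
    ∃ s : Fin n × Fin 2 → ℝ × ℝ,
      Function.Injective s ∧
      (∀ a b c : Fin n × Fin 2, a ≠ b → a ≠ c → b ≠ c →
        ¬ Collinear ℝ ({s a, s b, s c} : Set (ℝ × ℝ))) ∧
      (∀ i j l : Fin n, i ≠ j → i ≠ l → j ≠ l →
        ((orient (P i) (P j) (P l) = 1 →
          ∀ u v w : Fin 2, orient (s (i, u)) (s (j, v)) (s (l, w)) = 1) ∧
        (orient (P i) (P j) (P l) = -1 →
          ∀ u v w : Fin 2, orient (s (i, u)) (s (j, v)) (s (l, w)) = -1) ∧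
        (Collinear ℝ ({P i, P j, P l} : Set (ℝ × ℝ)) →
          ¬ ∀ u v w u' v' w' : Fin 2,
            orient (s (i, u)) (s (j, v)) (s (l, w)) =
              orient (s (i, u')) (s (j, v')) (s (l, w'))))) := by
  obtain ⟨δ, hδ0, hδ⟩ := exists_generic_directions hPinj
  have hgen : ∀ᶠ ε in 𝓝[>] (0 : ℝ), ∀ a b c : Fin n × Fin 2,
      a ≠ b → a ≠ c → b ≠ c → ¬ Collinear ℝ
        ({segmentEnd P δ ε a, segmentEnd P δ ε b, segmentEnd P δ ε c} : Set (ℝ × ℝ)) := by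
    simp only [eventually_all]
    exact fun a b c hab hac hbc =>
      eventually_not_collinear_segmentEnd fun _ => hδ a b c hab hac hbc
  have hstable : ∀ᶠ ε in 𝓝[>] (0 : ℝ), ∀ (i j l : Fin n) (u v w : Fin 2),
      orient (P i) (P j) (P l) ≠ 0 →
        orient (segmentEnd P δ ε (i, u)) (segmentEnd P δ ε (j, v)) (segmentEnd P δ ε (l, w)) =
          orient (P i) (P j) (P l) := by
    simp only [eventually_all]
    exact fun i j l u v w =>
      eventually_orient_segmentEnd_eq (p := (i, u)) (q := (j, v)) (r := (l, w))
  have hflip : ∀ᶠ ε in 𝓝[>] (0 : ℝ), ∀ i j l : Fin n,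
      i ≠ j → i ≠ l → j ≠ l → orient (P i) (P j) (P l) = 0 →
        orient (segmentEnd P δ ε (i, 0)) (segmentEnd P δ ε (j, 0)) (segmentEnd P δ ε (l, 0)) ≠
          orient (segmentEnd P δ ε (i, 1)) (segmentEnd P δ ε (j, 1))
            (segmentEnd P δ ε (l, 1)) := by
    simp only [eventually_all]
    exact fun i j l hij hil hjl h =>
      eventually_orient_segmentEnd_zero_ne_one h (hδ _ _ _ (by simpa) (by simpa) (by simpa))
  obtain ⟨ε, hinj, hgen, hstable, hflip⟩ :=
    ((eventually_injective_segmentEnd hPinj hδ0).and (hgen.and (hstable.and hflip))).exists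
  refine ⟨segmentEnd P δ ε, hinj, hgen, fun i j l hij hil hjl => ⟨?_, ?_, ?_⟩⟩
  · exact fun h u v w => (hstable i j l u v w (by simp [h])).trans h
  · exact fun h u v w => (hstable i j l u v w (by simp [h])).trans h
  · exact fun hcol hall =>
      hflip i j l hij hil hjl (orient_eq_zero_iff_collinear.mpr hcol) (hall 0 0 0 1 1 1)

/-- The order type of `n` arbitrary points can be encoded in the order type of `2n`
points in general position, one pair of segment endpoints per original point. -/
theorem encode_order_type_general_position (n : ℕ) (hn : 0 < n)
    (P : Fin n → ℝ × ℝ) (hPinj : Function.Injective P) :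
    ∃ s : Fin n × Fin 2 → ℝ × ℝ,
      Function.Injective s ∧
      (∀ a b c : Fin n × Fin 2, a ≠ b → a ≠ c → b ≠ c →
        ¬ Collinear ℝ ({s a, s b, s c} : Set (ℝ × ℝ))) ∧
      (∀ i j l : Fin n, i ≠ j → i ≠ l → j ≠ l →
        ((orient (P i) (P j) (P l) = 1 →
          ∀ u v w : Fin 2, orient (s (i, u)) (s (j, v)) (s (l, w)) = 1) ∧
        (orient (P i) (P j) (P l) = -1 →
          ∀ u v w : Fin 2, orient (s (i, u)) (s (j, v)) (s (l, w)) = -1) ∧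
        (Collinear ℝ ({P i, P j, P l} : Set (ℝ × ℝ)) →
          ¬ ∀ u v w u' v' w' : Fin 2,
            orient (s (i, u)) (s (j, v)) (s (l, w)) =
              orient (s (i, u')) (s (j, v')) (s (l, w'))))) :=
  encode_order_type_general_position_general n P hPinj
end

section
/- Let G be a finite simple graph and let G' be the simple graph on vertex set V(G) × {0, 1} in which (u, i) and (v, j) are adjacent if and only if u and v are adjacent in G. Then for every positive integer k: G has a vertex cover of size at most k if and only if G' has a vertex cover of size at most 2k. -/
/-!
A cover `S` of `G` pulls back to the cover `S × {0, 1}` of the doubled graph, of twice the size.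
Conversely, if a cover of the doubled graph misses some copy of `u`, it must contain every copy of
each neighbour `v` of `u`; so the vertices with both copies in the cover form a cover of `G`,
and it has at most half the size.
-/

def IsVertexCover {V : Type*} (G : SimpleGraph V) (S : Set V) : Prop :=
  ∀ ⦃u v : V⦄, G.Adj u v → u ∈ S ∨ v ∈ S

section

variable {V W : Type*} {G : SimpleGraph V}

theorem IsVertexCover.preimage {S : Set V} (hS : IsVertexCover G S) (f : W → V) :
    IsVertexCover (G.comap f) (f ⁻¹' S) :=
  fun _ _ h => hS h

theorem IsVertexCover.of_comap {f : W → V} {S : Set W} (hS : IsVertexCover (G.comap f) S) :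
    IsVertexCover G {v | f ⁻¹' {v} ⊆ S} := by
  intro u v huv
  rw [or_iff_not_imp_left]
  intro hu w' hw'
  obtain ⟨w, rfl : f w = u, hwS⟩ := Set.not_subset.mp hu
  obtain rfl : f w' = v := hw'
  exact (hS huv).resolve_left hwS

theorem Set.preimage_setOf_preimage_singleton_subset (f : W → V) (S : Set W) :
    f ⁻¹' {v | f ⁻¹' {v} ⊆ S} ⊆ S :=
  fun _ hw => hw rfl

end

theorem Set.ncard_preimage_fst {V : Type*} (ι : Type*) (s : Set V) :
    (Prod.fst ⁻¹' s : Set (V × ι)).ncard = s.ncard * Nat.card ι := by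
  rw [← Set.prod_univ, Set.ncard_prod, Set.ncard_univ]

theorem doubled_graph_vertex_cover_general {V : Type*} [Fintype V] (G : SimpleGraph V)
    (k : ℕ) :
    (∃ S : Set V, S.ncard ≤ k ∧ IsVertexCover G S) ↔
      (∃ S : Set (V × Fin 2), S.ncard ≤ 2 * k ∧
        IsVertexCover (G.comap (Prod.fst : V × Fin 2 → V)) S) := by
  constructor
  · rintro ⟨S, hcard, hS⟩
    refine ⟨Prod.fst ⁻¹' S, ?_, hS.preimage Prod.fst⟩
    rw [Set.ncard_preimage_fst, Nat.card_fin]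
    omega
  · rintro ⟨S, hcard, hS⟩
    refine ⟨_, ?_, hS.of_comap⟩
    have hle := Set.ncard_le_ncard (Set.preimage_setOf_preimage_singleton_subset Prod.fst S)
      S.toFinite
    rw [Set.ncard_preimage_fst, Nat.card_fin] at hle
    omega

/-- A finite graph `G` has a vertex cover of size at most `k` iff the graph obtained
by replacing each vertex by two independent copies (each copy of `u` adjacent to each
copy of `v` exactly when `u` and `v` are adjacent in `G`) has a vertex cover of size
at most `2k`. -/
theorem doubled_graph_vertex_cover {V : Type*} [Fintype V] (G : SimpleGraph V)
    (k : ℕ) (hk : 0 < k) :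
    (∃ S : Set V, S.ncard ≤ k ∧ IsVertexCover G S) ↔
      (∃ S : Set (V × Fin 2), S.ncard ≤ 2 * k ∧
        IsVertexCover (G.comap (Prod.fst : V × Fin 2 → V)) S) :=
  doubled_graph_vertex_cover_general G k
end

section
/- Let G be a simple graph and let v, w be vertices of G with v ≠ w and N(v) = N(w), where N denotes the open neighborhood. If S is an inclusion-minimal vertex cover of G, then v ∈ S if and only if w ∈ S. -/
namespace IsVertexCover

variable {V : Type*} {G : SimpleGraph V} {S : Set V}

lemma neighborSet_subset (hS : IsVertexCover G S) {w : V} (hw : w ∉ S) :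
    G.neighborSet w ⊆ S :=
  fun _ hu => (hS hu).resolve_left hw

lemma diff_singleton (hS : IsVertexCover G S) {v : V} (hv : G.neighborSet v ⊆ S) :
    IsVertexCover G (S \ {v}) := by
  intro a b hab
  by_cases ha : a = v
  · subst ha
    exact Or.inr ⟨hv hab, hab.ne.symm⟩
  by_cases hb : b = v
  · subst hb
    exact Or.inl ⟨hv hab.symm, hab.ne⟩
  exact (hS hab).imp (fun h => ⟨h, ha⟩) (fun h => ⟨h, hb⟩)

lemma not_neighborSet_subset_of_minimal (hS : IsVertexCover G S)
    (hmin : ∀ S' ⊆ S, IsVertexCover G S' → S' = S) {v : V} (hv : v ∈ S) :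
    ¬ G.neighborSet v ⊆ S := fun hsub => by
  have hdrop : S \ {v} = S := hmin _ Set.sdiff_subset (hS.diff_singleton hsub)
  exact (hdrop.symm ▸ hv : v ∈ S \ {v}).2 rfl

end IsVertexCover

theorem minimal_vertex_cover_twins_general {V : Type*} (G : SimpleGraph V) (v w : V)
    (hN : G.neighborSet v = G.neighborSet w)
    (S : Set V) (hS : IsVertexCover G S)
    (hmin : ∀ S' ⊆ S, IsVertexCover G S' → S' = S) :
    (v ∈ S ↔ w ∈ S) := by
  have twin_mem : ∀ {a b : V}, G.neighborSet a = G.neighborSet b → a ∈ S → b ∈ S :=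
    fun hab ha => by_contra fun hb =>
      hS.not_neighborSet_subset_of_minimal hmin ha (hab ▸ hS.neighborSet_subset hb)
  exact ⟨twin_mem hN, twin_mem hN.symm⟩

/-- An inclusion-minimal vertex cover contains a vertex iff it contains any of its
twins (vertices with the same open neighborhood). -/
theorem minimal_vertex_cover_twins {V : Type*} (G : SimpleGraph V) (v w : V)
    (hvw : v ≠ w) (hN : G.neighborSet v = G.neighborSet w)
    (S : Set V) (hS : IsVertexCover G S)
    (hmin : ∀ S' ⊆ S, IsVertexCover G S' → S' = S) :
    (v ∈ S ↔ w ∈ S) :=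
  minimal_vertex_cover_twins_general G v w hN S hS hmin
end

section
/- Let F be a finite family of finite sets such that any two distinct members of F have at most one common element. Let U be a finite set, k a positive integer, and C ⊆ F with |C| ≤ k and U ⊆ ⋃_{A ∈ C} A. If B ∈ F satisfies |B ∩ U| ≥ k + 1, then B ∈ C. -/
open Finset

section

variable {α : Type*} [DecidableEq α]

theorem Finset.card_inter_le_sum_card_inter_of_covers {C : Finset (Finset α)} {U : Finset α}
    (hcov : ∀ u ∈ U, ∃ A ∈ C, u ∈ A) (B : Finset α) :
    #(B ∩ U) ≤ ∑ A ∈ C, #(A ∩ B) := by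
  have hsub : B ∩ U ⊆ C.biUnion (· ∩ B) := by
    intro x hx
    obtain ⟨hxB, hxU⟩ := mem_inter.mp hx
    obtain ⟨A, hA, hxA⟩ := hcov x hxU
    exact mem_biUnion.mpr ⟨A, hA, mem_inter.mpr ⟨hxA, hxB⟩⟩
  exact (card_le_card hsub).trans card_biUnion_le

theorem Finset.card_inter_le_card_of_covers {C : Finset (Finset α)} {U B : Finset α}
    (hcov : ∀ u ∈ U, ∃ A ∈ C, u ∈ A) (hCB : ∀ A ∈ C, #(A ∩ B) ≤ 1) :
    #(B ∩ U) ≤ #C :=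
  calc #(B ∩ U) ≤ ∑ A ∈ C, #(A ∩ B) := card_inter_le_sum_card_inter_of_covers hcov B
    _ ≤ ∑ _A ∈ C, 1 := sum_le_sum hCB
    _ = #C := card_eq_sum_ones C |>.symm

end

theorem mandatory_set_general {α : Type*} [DecidableEq α] (F : Finset (Finset α))
    (hF : ∀ A ∈ F, ∀ B ∈ F, A ≠ B → (A ∩ B).card ≤ 1)
    (U : Finset α) (k : ℕ)
    (C : Finset (Finset α)) (hCF : C ⊆ F) (hCcard : C.card ≤ k)
    (hcov : ∀ u ∈ U, ∃ A ∈ C, u ∈ A)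
    (B : Finset α) (hB : B ∈ F) (hBU : k + 1 ≤ (B ∩ U).card) :
    B ∈ C := by
  by_contra hBC
  have hCB : ∀ A ∈ C, #(A ∩ B) ≤ 1 := fun A hA ↦
    hF A (hCF hA) B hB (ne_of_mem_of_not_mem hA hBC)
  have hBU_le : #(B ∩ U) ≤ #C := card_inter_le_card_of_covers hcov hCB
  omega

/-- Mandatory-set rule for Set Cover instances with pairwise intersections of size at
most one: if `C ⊆ F` has at most `k` sets and covers `U`, and `B ∈ F` contains at
least `k + 1` elements of `U`, then `B ∈ C`. -/
theorem mandatory_set {α : Type*} [DecidableEq α] (F : Finset (Finset α))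
    (hF : ∀ A ∈ F, ∀ B ∈ F, A ≠ B → (A ∩ B).card ≤ 1)
    (U : Finset α) (k : ℕ) (hk : 0 < k)
    (C : Finset (Finset α)) (hCF : C ⊆ F) (hCcard : C.card ≤ k)
    (hcov : ∀ u ∈ U, ∃ A ∈ C, u ∈ A)
    (B : Finset α) (hB : B ∈ F) (hBU : k + 1 ≤ (B ∩ U).card) :
    B ∈ C :=
  mandatory_set_general F hF U k C hCF hCcard hcov B hB hBU
end
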